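/- Spread lemma: There is a universal constant C such that for all k ≥ 2 and R > 1, if 𝒜 is a collection of subsets of X each of size at most k, and there exists an R-spread probability measure π supported on 𝒜, then for all p ≥ C(log k)/R (with p ≤ 1), a p-biased random subset V of X contains some element of 𝒜 with probability at least 0.9. -/

import Mathlib

/-!
Write `V ~ Q_p` as the union of independent `W ~ Q_q` and `V' ~ Q_p'`, where
`p = q + p' - q p'`. Given `W`, replace each `H ∈ 𝒜` by the fragment `G \ W`, where `G ∈ 𝒜`,
`G ⊆ H ∪ W` has the fewest elements outside `W`. If `V'` contains a fragment then `W ∪ V'`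
contains a member of `𝒜`, and since `G \ W ⊆ H`, pushing `π` forward along `H ↦ G \ W` keeps
it `R`-spread. Fragments smaller than half the current size bound go on to the next round; the
others are minimal fragments `T` with `|T| ≥ m`, carrying mass at most `∑ R ^ (-|T|)`.
Substituting `V = W ∪ T` turns the `Q_q`-expectation of that sum into the `Q_q`-expectation
of `∑ z ^ |T|`, `z = (1 - q) / (q R)`, over the minimal fragments `T ⊆ V` relative to `V \ T`.
These all lie in a single member of `𝒜`, so the expectation is at most `(4 z) ^ m`.
With `q = 80 / R`, the `log₂ k + 1` halving rounds need bias at most `p`, and their errors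
`(4 z) ^ 2 ^ j` sum to at most `0.1`.
-/

/-- The p-biased product measure on subsets of a finite set `X`. -/
def Qbias {X : Type*} [Fintype X] [DecidableEq X] (p : ℝ) (V : Finset X) : ℝ :=
  p ^ V.card * (1 - p) ^ (Fintype.card X - V.card)

open Finset

variable {X : Type*} [DecidableEq X]

def pushforward (s : Finset (Finset X)) (φ : Finset X → Finset X) (w : Finset X → ℝ)
    (T : Finset X) : ℝ :=
  ∑ H ∈ s.filter (φ · = T), w H

section

variable {w : Finset X → ℝ} {s : Finset (Finset X)} {φ : Finset X → Finset X}

lemma pushforward_nonneg (hw0 : ∀ H, 0 ≤ w H) (T : Finset X) : 0 ≤ pushforward s φ w T :=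
  sum_nonneg fun H _ => hw0 H

lemma sum_pushforward {t : Finset (Finset X)} (h : ∀ H ∈ s, φ H ∈ t) :
    ∑ T ∈ t, pushforward s φ w T = ∑ H ∈ s, w H :=
  sum_fiberwise_of_maps_to h w

end

variable [Fintype X]

lemma sum_prod_decide_mem (F : X → Bool → ℝ) :
    ∑ s : Finset X, ∏ x, F x (decide (x ∈ s)) = ∏ x, (F x true + F x false) := by
  rw [Fintype.prod_add]
  refine Fintype.sum_congr _ _ fun s => ?_
  rw [← prod_mul_prod_compl s]
  congr 1 <;> refine prod_congr rfl fun x hx => ?_ <;> simp_all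

lemma Qbias_eq_prod (p : ℝ) (V : Finset X) :
    Qbias p V = ∏ x, if x ∈ V then p else 1 - p := by
  rw [prod_ite, prod_const, prod_const, Qbias, ← card_compl]
  congr 3 <;> ext <;> simp

lemma Qbias_nonneg {p : ℝ} (hp0 : 0 ≤ p) (hp1 : p ≤ 1) (V : Finset X) : 0 ≤ Qbias p V :=
  mul_nonneg (pow_nonneg hp0 _) (pow_nonneg (sub_nonneg.2 hp1) _)

lemma sum_Qbias (p : ℝ) : ∑ V : Finset X, Qbias p V = 1 := by
  simpa [Qbias_eq_prod] using sum_prod_decide_mem (X := X) fun _ i => if i then p else 1 - p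

lemma sum_ite_union_eq_Qbias (a b : ℝ) (V : Finset X) :
    ∑ W : Finset X, ∑ W' : Finset X, (if W ∪ W' = V then Qbias a W * Qbias b W' else 0)
      = Qbias (a + b - a * b) V := by
  -- Both sides factor over the points `x`, and `x ∈ W ∪ W'` has probability `a + b - a * b`.
  let F : X → Bool → Bool → ℝ := fun x i j =>
    if (i || j) = decide (x ∈ V) then (if i then a else 1 - a) * (if j then b else 1 - b) else 0
  have hF : ∀ W W' : Finset X, (if W ∪ W' = V then Qbias a W * Qbias b W' else 0)
      = ∏ x, F x (decide (x ∈ W)) (decide (x ∈ W')) := by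
    intro W W'
    simp only [F, prod_ite_zero, Qbias_eq_prod, ← prod_mul_distrib]
    congr 1
    · simp [Finset.ext_iff, ← Bool.decide_or]
    · simp only [decide_eq_true_eq]
  simp_rw [hF]
  rw [sum_congr rfl fun W _ => sum_prod_decide_mem fun x => F x (decide (x ∈ W)),
    sum_prod_decide_mem fun x i => F x i true + F x i false, Qbias_eq_prod]
  refine prod_congr rfl fun x _ => ?_
  by_cases hx : x ∈ V <;>
    simp only [F, hx, decide_true, decide_false, Bool.or_self, Bool.or_true, Bool.or_false,
      Bool.true_eq_false, Bool.false_eq_true, ↓reduceIte, add_zero, zero_add] <;> ring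

lemma sum_Qbias_mul_eq_sum_union (a b : ℝ) (f : Finset X → ℝ) :
    ∑ V : Finset X, Qbias (a + b - a * b) V * f V
      = ∑ W : Finset X, Qbias a W * ∑ W' : Finset X, Qbias b W' * f (W ∪ W') := by
  simp_rw [← sum_ite_union_eq_Qbias, sum_mul, mul_sum]
  rw [sum_comm]
  refine sum_congr rfl fun W _ => ?_
  rw [sum_comm]
  refine sum_congr rfl fun W' _ => ?_
  simp [ite_mul, mul_assoc]

def hitProb (p : ℝ) (ℋ : Finset (Finset X)) : ℝ :=
  ∑ V ∈ univ.filter (fun V : Finset X => ∃ H ∈ ℋ, H ⊆ V), Qbias p V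

lemma hitProb_nonneg {p : ℝ} (hp0 : 0 ≤ p) (hp1 : p ≤ 1) (ℋ : Finset (Finset X)) :
    0 ≤ hitProb p ℋ :=
  sum_nonneg fun V _ => Qbias_nonneg hp0 hp1 V

lemma hitProb_mono {p : ℝ} (hp0 : 0 ≤ p) (hp1 : p ≤ 1) {ℋ ℋ' : Finset (Finset X)}
    (h : ℋ ⊆ ℋ') : hitProb p ℋ ≤ hitProb p ℋ' :=
  sum_le_sum_of_subset_of_nonneg (monotone_filter_right _ fun _ _ ⟨H, hH, hHV⟩ => ⟨H, h hH, hHV⟩)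
    fun V _ _ => Qbias_nonneg hp0 hp1 V

lemma hitProb_eq_one_of_empty_mem (p : ℝ) {ℋ : Finset (Finset X)} (h : ∅ ∈ ℋ) :
    hitProb p ℋ = 1 := by
  rw [hitProb, filter_true_of_mem fun V _ => ⟨∅, h, empty_subset V⟩, sum_Qbias]

lemma hitProb_add_sub_mul (a b : ℝ) (ℋ : Finset (Finset X)) :
    hitProb (a + b - a * b) ℋ = ∑ W : Finset X, Qbias a W * hitProb b (ℋ.image (· \ W)) := by
  have hit : ∀ W V : Finset X, (∃ H ∈ ℋ, H ⊆ W ∪ V) ↔ ∃ T ∈ ℋ.image (· \ W), T ⊆ V := by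
    simp only [mem_image, exists_exists_and_eq_and]
    exact fun W V => exists_congr fun H => and_congr_right fun _ => sdiff_le_iff.symm
  have h := sum_Qbias_mul_eq_sum_union a b fun V => if ∃ H ∈ ℋ, H ⊆ V then 1 else 0
  simp only [mul_boole, ← sum_filter, hit] at h
  exact h

def IsSpread (R : ℝ) (w : Finset X → ℝ) : Prop :=
  ∀ S : Finset X, ∑ A ∈ univ.filter (fun A : Finset X => S ⊆ A), w A ≤ 1 / R ^ S.card

section

variable {R : ℝ} {w : Finset X → ℝ} {s : Finset (Finset X)} {φ : Finset X → Finset X}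

lemma IsSpread.sum_le_one (hw0 : ∀ H, 0 ≤ w H) (hw : IsSpread R w)
    (ℋ : Finset (Finset X)) : ∑ H ∈ ℋ, w H ≤ 1 := by
  have h := hw ∅
  simp only [empty_subset, filter_true, card_empty, pow_zero, div_one] at h
  exact (sum_le_univ_sum_of_nonneg hw0).trans h

lemma IsSpread.pushforward (hw0 : ∀ H, 0 ≤ w H) (hw : IsSpread R w) (hφ : ∀ H ∈ s, φ H ⊆ H) :
    IsSpread R (pushforward s φ w) := by
  intro S
  simp only [_root_.pushforward]
  rw [sum_fiberwise_eq_sum_filter]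
  refine le_trans (sum_le_sum_of_subset_of_nonneg ?_ fun H _ _ => hw0 H) (hw S)
  intro H hH
  simp only [mem_filter, mem_univ, true_and] at hH ⊢
  exact hH.2.trans (hφ H hH.1)

lemma sum_le_sum_one_div_pow_of_mapsTo (hw0 : ∀ H, 0 ≤ w H) (hw : IsSpread R w)
    (hφ : ∀ H ∈ s, φ H ⊆ H) {t : Finset (Finset X)} (hst : ∀ H ∈ s, φ H ∈ t) :
    ∑ H ∈ s, w H ≤ ∑ T ∈ t, 1 / R ^ T.card := by
  rw [← sum_pushforward hst]
  refine sum_le_sum fun T _ => le_trans ?_ (hw.pushforward hw0 hφ T)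
  exact single_le_sum (fun T' _ => pushforward_nonneg hw0 T') (by simp)

end

def minFragments (ℋ : Finset (Finset X)) (W : Finset X) : Finset (Finset X) :=
  (ℋ.image (· \ W)).filter fun T => ∀ G ∈ ℋ, G ⊆ T ∪ W → T.card ≤ (G \ W).card

lemma exists_map_mem_minFragments (ℋ : Finset (Finset X)) (W : Finset X) :
    ∃ φ : Finset X → Finset X, ∀ H ∈ ℋ, φ H ⊆ H ∧ φ H ∈ minFragments ℋ W := by
  have : ∀ H ∈ ℋ, ∃ T, T ⊆ H ∧ T ∈ minFragments ℋ W := by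
    intro H hH
    obtain ⟨G, hG, hGmin⟩ := exists_min_image (ℋ.filter (· ⊆ H ∪ W)) (fun G => (G \ W).card)
      ⟨H, mem_filter.2 ⟨hH, subset_union_left⟩⟩
    rw [mem_filter] at hG
    refine ⟨G \ W, ?_, mem_filter.2 ⟨mem_image_of_mem _ hG.1, fun G' hG' hG'W => ?_⟩⟩
    · intro x hx
      rw [mem_sdiff] at hx
      exact (mem_union.1 (hG.2 hx.1)).resolve_right hx.2
    · rw [sdiff_union_self_eq_union] at hG'W
      exact hGmin G' (mem_filter.2 ⟨hG', hG'W.trans (union_subset hG.2 subset_union_right)⟩)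
  choose! φ hφ using this
  exact ⟨φ, hφ⟩

section

variable {ℋ : Finset (Finset X)}

lemma exists_subset_of_mem_minFragments {V T : Finset X} (hTV : T ⊆ V)
    (hT : T ∈ minFragments ℋ (V \ T)) : ∃ H ∈ ℋ, H ⊆ V := by
  obtain ⟨H, hH, hHT⟩ := mem_image.1 (mem_filter.1 hT).1
  exact ⟨H, hH, sdiff_union_of_subset hTV ▸ sdiff_le_iff.1 hHT.le⟩

lemma subset_of_mem_minFragments {V T H : Finset X} (hH : H ∈ ℋ) (hHV : H ⊆ V) (hTV : T ⊆ V)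
    (hT : T ∈ minFragments ℋ (V \ T)) : T ⊆ H := by
  have hHT : H \ (V \ T) ⊆ T := fun x hx => by
    simp only [mem_sdiff] at hx
    exact not_not.1 fun h => hx.2 ⟨hHV hx.1, h⟩
  have hcard := (mem_filter.1 hT).2 H hH (by rwa [union_sdiff_of_subset hTV])
  exact (eq_of_subset_of_card_le hHT hcard).symm ▸ sdiff_subset

lemma sum_pow_card_minFragments_le {b : ℕ} (hℋ : ∀ H ∈ ℋ, H.card ≤ b)
    {z : ℝ} (hz0 : 0 ≤ z) (hz1 : z ≤ 1) (m : ℕ) (V : Finset X) :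
    ∑ T ∈ V.powerset.filter (fun T => T ∈ minFragments ℋ (V \ T) ∧ m ≤ T.card), z ^ T.card
      ≤ 2 ^ b * z ^ m := by
  set S := V.powerset.filter (fun T => T ∈ minFragments ℋ (V \ T) ∧ m ≤ T.card)
  have hS : ∀ T ∈ S, T ⊆ V ∧ T ∈ minFragments ℋ (V \ T) ∧ m ≤ T.card := by
    simp [S]
  obtain hS0 | ⟨T₀, hT₀⟩ := S.eq_empty_or_nonempty
  · rw [hS0, sum_empty]
    positivity
  obtain ⟨H, hH, hHV⟩ := exists_subset_of_mem_minFragments (hS T₀ hT₀).1 (hS T₀ hT₀).2.1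
  calc ∑ T ∈ S, z ^ T.card
      ≤ ∑ T ∈ H.powerset, z ^ m := by
        refine sum_le_sum_of_subset_of_nonneg (fun T hT => ?_) (fun _ _ _ => by positivity)
          |>.trans' (sum_le_sum fun T hT => pow_le_pow_of_le_one hz0 hz1 (hS T hT).2.2)
        exact mem_powerset.2 (subset_of_mem_minFragments hH hHV (hS T hT).1 (hS T hT).2.1)
    _ = 2 ^ H.card * z ^ m := by rw [sum_const, card_powerset, nsmul_eq_mul, Nat.cast_pow,
        Nat.cast_two]
    _ ≤ 2 ^ b * z ^ m := by gcongr; exacts [one_le_two, hℋ H hH]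

end

lemma sum_sum_disjoint_eq_sum_sum_powerset (F : Finset X → Finset X → ℝ) :
    ∑ W : Finset X, ∑ T ∈ univ.filter (Disjoint W), F W T
      = ∑ V : Finset X, ∑ T ∈ V.powerset, F (V \ T) T := by
  rw [sum_comm' (t' := univ) (s' := fun T => univ.filter (Disjoint · T)) (by simp),
    sum_comm' (t := powerset) (f := fun V T => F (V \ T) T) (t' := univ)
      (s' := fun T => univ.filter (T ⊆ ·)) (by simp)]
  refine sum_congr rfl fun T _ => sum_nbij' (· ∪ T) (· \ T) ?_ ?_ ?_ ?_ ?_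
  all_goals intro V hV; simp only [mem_filter, mem_univ, true_and] at hV
  · simp
  · simpa using sdiff_disjoint
  · exact union_sdiff_cancel_right hV
  · exact sdiff_union_of_subset hV
  · rw [union_sdiff_cancel_right hV]

lemma Qbias_sdiff_mul {q : ℝ} (hq : q ≠ 0) (R : ℝ) {T V : Finset X} (hTV : T ⊆ V) :
    Qbias q (V \ T) * (1 / R ^ T.card) = Qbias q V * ((1 - q) / (q * R)) ^ T.card := by
  obtain ⟨c, hc⟩ := Nat.exists_eq_add_of_le (card_le_card hTV)
  obtain ⟨d, hd⟩ := Nat.exists_eq_add_of_le (card_le_univ V)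
  rw [Qbias, Qbias, card_sdiff_of_subset hTV, hd, hc, Nat.add_sub_cancel_left,
    show T.card + c + d - c = d + T.card by omega, Nat.add_sub_cancel_left, div_pow, mul_pow,
    pow_add, pow_add]
  field_simp

lemma sum_Qbias_mul_sum_minFragments_le {q R : ℝ} (hq0 : 0 < q) (hq1 : q ≤ 1) (hR : 0 < R)
    (hz : (1 - q) / (q * R) ≤ 1) {ℋ : Finset (Finset X)} {b : ℕ} (hℋ : ∀ H ∈ ℋ, H.card ≤ b)
    (m : ℕ) :
    ∑ W : Finset X, Qbias q W * ∑ T ∈ (minFragments ℋ W).filter (m ≤ ·.card), 1 / R ^ T.card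
      ≤ 2 ^ b * ((1 - q) / (q * R)) ^ m := by
  set z := (1 - q) / (q * R)
  have hz0 : 0 ≤ z := div_nonneg (sub_nonneg.2 hq1) (by positivity)
  set F : Finset X → Finset X → ℝ := fun W T =>
    if T ∈ minFragments ℋ W ∧ m ≤ T.card then Qbias q W * (1 / R ^ T.card) else 0
  have hdisj : ∀ W, (minFragments ℋ W).filter (m ≤ ·.card)
      = (univ.filter (Disjoint W)).filter (fun T => T ∈ minFragments ℋ W ∧ m ≤ T.card) := by
    intro W
    ext T
    simp only [mem_filter, mem_univ, true_and]
    refine ⟨fun h => ⟨?_, h⟩, fun h => h.2⟩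
    obtain ⟨H, -, rfl⟩ := mem_image.1 (mem_filter.1 h.1).1
    exact disjoint_sdiff
  calc ∑ W : Finset X, Qbias q W * ∑ T ∈ (minFragments ℋ W).filter (m ≤ ·.card), 1 / R ^ T.card
      = ∑ W : Finset X, ∑ T ∈ univ.filter (Disjoint W), F W T := by
        simp only [F, hdisj, mul_sum, sum_filter, mul_ite, mul_zero]
    _ = ∑ V : Finset X, Qbias q V *
          ∑ T ∈ V.powerset.filter (fun T => T ∈ minFragments ℋ (V \ T) ∧ m ≤ T.card),
            z ^ T.card := by
        rw [sum_sum_disjoint_eq_sum_sum_powerset]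
        refine sum_congr rfl fun V _ => ?_
        rw [mul_sum, sum_filter]
        refine sum_congr rfl fun T hT => ?_
        simp only [F]
        split_ifs
        exacts [Qbias_sdiff_mul hq0.ne' R (mem_powerset.1 hT), rfl]
    _ ≤ ∑ V : Finset X, Qbias q V * (2 ^ b * z ^ m) := by
        gcongr with V
        exacts [Qbias_nonneg hq0.le hq1 V, sum_pow_card_minFragments_le hℋ hz0 hz m V]
    _ = 2 ^ b * z ^ m := by rw [← sum_mul, sum_Qbias, one_mul]

variable (X) in
def HitBound (R p : ℝ) (n : ℕ) (E : ℝ) : Prop :=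
  ∀ (w : Finset X → ℝ) (ℋ : Finset (Finset X)), (∀ H, 0 ≤ w H) → IsSpread R w →
    (∀ H ∈ ℋ, H.card < n) → ∑ H ∈ ℋ, w H - E ≤ hitProb p ℋ

lemma hitBound_one {R p : ℝ} (hp0 : 0 ≤ p) (hp1 : p ≤ 1) : HitBound X R p 1 0 := by
  intro w ℋ hw0 hw hℋ
  rw [sub_zero]
  by_cases h : ∅ ∈ ℋ
  · rw [hitProb_eq_one_of_empty_mem p h]
    exact hw.sum_le_one hw0 ℋ
  · have : ℋ = ∅ := eq_empty_of_forall_notMem fun H hH =>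
      h (card_eq_zero.1 (Nat.lt_one_iff.1 (hℋ H hH)) ▸ hH)
    rw [this, sum_empty]
    exact hitProb_nonneg hp0 hp1 _

lemma HitBound.sum_sub_le_hitProb_image_sdiff {R p E : ℝ} {n : ℕ} (hp0 : 0 ≤ p) (hp1 : p ≤ 1)
    (h : HitBound X R p n E) {w : Finset X → ℝ} (hw0 : ∀ H, 0 ≤ w H) (hw : IsSpread R w)
    (ℋ : Finset (Finset X)) (W : Finset X) :
    ∑ H ∈ ℋ, w H - E - ∑ T ∈ (minFragments ℋ W).filter (n ≤ ·.card), 1 / R ^ T.card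
      ≤ hitProb p (ℋ.image (· \ W)) := by
  obtain ⟨φ, hφ⟩ := exists_map_mem_minFragments ℋ W
  have hsmall : ∑ H ∈ ℋ.filter (fun H => (φ H).card < n), w H - E
      ≤ hitProb p (ℋ.image (· \ W)) := by
    set s := ℋ.filter (fun H => (φ H).card < n)
    have hs : ∀ H ∈ s, H ∈ ℋ ∧ (φ H).card < n := fun H hH => mem_filter.1 hH
    calc ∑ H ∈ s, w H - E = ∑ T ∈ s.image φ, pushforward s φ w T - E := by
          rw [sum_pushforward fun H hH => mem_image_of_mem φ hH]
      _ ≤ hitProb p (s.image φ) :=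
          h _ _ (pushforward_nonneg hw0) (hw.pushforward hw0 fun H hH => (hφ H (hs H hH).1).1)
            (forall_mem_image.2 fun H hH => (hs H hH).2)
      _ ≤ hitProb p (ℋ.image (· \ W)) := hitProb_mono hp0 hp1 <| image_subset_iff.2 fun H hH =>
          (mem_filter.1 (hφ H (hs H hH).1).2).1
  have hlarge : ∑ H ∈ ℋ.filter (fun H => ¬ (φ H).card < n), w H
      ≤ ∑ T ∈ (minFragments ℋ W).filter (n ≤ ·.card), 1 / R ^ T.card :=
    sum_le_sum_one_div_pow_of_mapsTo hw0 hw (fun H hH => (hφ H (mem_filter.1 hH).1).1) fun H hH =>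
      mem_filter.2 ⟨(hφ H (mem_filter.1 hH).1).2, not_lt.1 (mem_filter.1 hH).2⟩
  rw [← sum_filter_add_sum_filter_not ℋ (fun H => (φ H).card < n)]
  linarith

lemma HitBound.two_mul {q R p E : ℝ} {n : ℕ} (hq0 : 0 < q) (hq1 : q ≤ 1) (hR : 0 < R)
    (hz : (1 - q) / (q * R) ≤ 1 / 4) (hp0 : 0 ≤ p) (hp1 : p ≤ 1) (h : HitBound X R p n E) :
    HitBound X R (q + p - q * p) (2 * n) (E + (4 * ((1 - q) / (q * R))) ^ n) := by
  intro w ℋ hw0 hw hℋ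
  have hcount := sum_Qbias_mul_sum_minFragments_le hq0 hq1 hR (by linarith) (b := 2 * n)
    (fun H hH => (hℋ H hH).le) n
  rw [pow_mul, ← mul_pow, show (2 : ℝ) ^ 2 = 4 by norm_num] at hcount
  rw [hitProb_add_sub_mul]
  calc ∑ H ∈ ℋ, w H - (E + (4 * ((1 - q) / (q * R))) ^ n)
      ≤ ∑ W : Finset X, Qbias q W * (∑ H ∈ ℋ, w H - E
          - ∑ T ∈ (minFragments ℋ W).filter (n ≤ ·.card), 1 / R ^ T.card) := by
        simp only [mul_sub, sum_sub_distrib, ← sum_mul, sum_Qbias, one_mul]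
        linarith
    _ ≤ ∑ W : Finset X, Qbias q W * hitProb p (ℋ.image (· \ W)) := by
        gcongr with W
        exacts [Qbias_nonneg hq0.le hq1 W, h.sum_sub_le_hitProb_image_sdiff hp0 hp1 hw0 hw ℋ W]

lemma exists_add_sub_mul_eq {q p : ℝ} (hq0 : 0 ≤ q) (hq1 : q < 1) (hp1 : p ≤ 1) {L : ℕ}
    (hpL : 1 - p ≤ (1 - q) ^ (L + 1)) :
    ∃ p', 0 ≤ p' ∧ p' ≤ 1 ∧ 1 - p' ≤ (1 - q) ^ L ∧ q + p' - q * p' = p := by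
  have h1q : 0 < 1 - q := by linarith
  have hL : (1 - p) / (1 - q) ≤ (1 - q) ^ L := by rwa [div_le_iff₀ h1q, ← pow_succ]
  refine ⟨1 - (1 - p) / (1 - q), ?_, ?_, by linarith, ?_⟩
  · linarith [pow_le_one₀ h1q.le (by linarith : 1 - q ≤ 1) (n := L)]
  · linarith [div_nonneg (sub_nonneg.2 hp1) h1q.le]
  · field_simp
    ring

lemma hitBound_two_pow {q R : ℝ} (hq0 : 0 < q) (hq1 : q < 1) (hR : 0 < R)
    (hz : (1 - q) / (q * R) ≤ 1 / 4) (L : ℕ) {p : ℝ} (hp0 : 0 ≤ p) (hp1 : p ≤ 1)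
    (hpL : 1 - p ≤ (1 - q) ^ L) :
    HitBound X R p (2 ^ L) (∑ j ∈ range L, (4 * ((1 - q) / (q * R))) ^ 2 ^ j) := by
  induction L generalizing p with
  | zero => simpa using hitBound_one hp0 hp1
  | succ L ih =>
    obtain ⟨p', hp'0, hp'1, hp'L, rfl⟩ := exists_add_sub_mul_eq hq0.le hq1 hp1 hpL
    rw [pow_succ', sum_range_succ]
    exact (ih hp'0 hp'1 hp'L).two_mul hq0 hq1.le hR hz hp'0 hp'1

lemma sum_pow_two_pow_le {r : ℝ} (hr0 : 0 ≤ r) (hr : r ≤ 1 / 2) (L : ℕ) :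
    ∑ j ∈ range L, r ^ 2 ^ j ≤ 2 * r := by
  calc ∑ j ∈ range L, r ^ 2 ^ j ≤ ∑ j ∈ range L, r * (1 / 2) ^ j := by
        refine sum_le_sum fun j _ => ?_
        calc r ^ 2 ^ j ≤ r ^ (j + 1) :=
              pow_le_pow_of_le_one hr0 (by linarith) (Nat.lt_two_pow_self)
          _ ≤ r * (1 / 2) ^ j := by
              rw [pow_succ']
              exact mul_le_mul_of_nonneg_left (pow_le_pow_left₀ hr0 hr j) hr0
    _ ≤ 2 * r := by
        rw [← mul_sum]
        nlinarith [sum_geometric_two_le L]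

lemma natLog_succ_le_three_mul_log {k : ℕ} (hk : 2 ≤ k) :
    ((Nat.log 2 k + 1 : ℕ) : ℝ) ≤ 3 * Real.log k := by
  have h1 : (Nat.log 2 k : ℝ) * Real.log 2 ≤ Real.log k := by
    rw [← Real.log_pow]
    exact Real.log_le_log (by positivity) (by exact_mod_cast Nat.pow_log_le_self 2 (by omega))
  have h2 : Real.log 2 ≤ Real.log k := Real.log_le_log (by norm_num) (by exact_mod_cast hk)
  have h3 : 2 / 3 < Real.log 2 := by linarith [Real.log_two_gt_d9]
  push_cast
  nlinarith [Nat.cast_nonneg (α := ℝ) (Nat.log 2 k)]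

lemma one_sub_le_one_sub_pow {p q : ℝ} (hq : q ≤ 2) {L : ℕ} (h : L * q ≤ p) :
    1 - p ≤ (1 - q) ^ L := by
  have hBernoulli := one_add_mul_le_pow (by linarith : -2 ≤ -q) L
  rw [← sub_eq_add_neg] at hBernoulli
  linarith

/-- spread lemma: there is a universal constant C such that for every
k ≥ 2, R > 1, a collection 𝒜 of subsets of X of size ≤ k carrying an R-spread
measure π, and every p with C(log k)/R ≤ p ≤ 1, a p-biased random subset V contains
an element of 𝒜 with probability at least 0.9. -/
theorem stmt11 :
    ∃ C : ℝ, 0 < C ∧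
      ∀ (X : Type) [Fintype X] [DecidableEq X] (k : ℕ), 2 ≤ k →
      ∀ R : ℝ, 1 < R →
      ∀ 𝒜 : Finset (Finset X), (∀ A ∈ 𝒜, A.card ≤ k) →
      ∀ π : Finset X → ℝ, (∀ A, 0 ≤ π A) → (∑ A : Finset X, π A = 1) →
      (∀ A : Finset X, π A ≠ 0 → A ∈ 𝒜) →
      (∀ S : Finset X,
        ∑ A ∈ Finset.univ.filter (fun A : Finset X => S ⊆ A), π A ≤ 1 / R ^ S.card) →
      ∀ p : ℝ, C * Real.log k / R ≤ p → p ≤ 1 →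
      (0.9 : ℝ) ≤
        ∑ V ∈ Finset.univ.filter (fun V : Finset X => ∃ A ∈ 𝒜, A ⊆ V), Qbias p V := by
  refine ⟨240, by norm_num, ?_⟩
  intro X _ _ k hk R hR 𝒜 h𝒜 π hπ0 hπ1 hπ𝒜 hπ p hpk hp1
  set L := Nat.log 2 k + 1
  have hL2 : (2 : ℝ) ≤ L := by exact_mod_cast Nat.succ_le_succ (Nat.log_pos one_lt_two hk)
  have hL : (L : ℝ) * 80 ≤ 240 * Real.log k := by linarith [natLog_succ_le_three_mul_log hk]
  have hR0 : 0 < R := by linarith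
  have hRk : 240 * Real.log k ≤ R := (div_le_one hR0).1 (hpk.trans hp1)
  set q := 80 / R
  have hqR : q * R = 80 := div_mul_cancel₀ 80 hR0.ne'
  have hq0 : 0 < q := by positivity
  have hq1 : q < 1 := (div_lt_one hR0).2 (by linarith)
  have hz0 : 0 ≤ (1 - q) / (q * R) := by rw [hqR]; linarith
  have hz : (1 - q) / (q * R) ≤ 1 / 80 := by rw [hqR]; linarith
  have hp0 : 0 ≤ p := le_trans (by positivity) hpk
  have hLq : (L : ℝ) * q ≤ p :=
    calc (L : ℝ) * q = L * 80 / R := by ring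
      _ ≤ 240 * Real.log k / R := by gcongr
      _ ≤ p := hpk
  have hbound := hitBound_two_pow hq0 hq1 hR0 (by linarith) L hp0 hp1
    (one_sub_le_one_sub_pow (by linarith) hLq) π 𝒜 hπ0 hπ
    fun A hA => (h𝒜 A hA).trans_lt (Nat.lt_pow_succ_log_self one_lt_two k)
  have hmass : ∑ A ∈ 𝒜, π A = 1 :=
    hπ1 ▸ sum_subset (subset_univ 𝒜) fun A _ hA => not_not.1 (mt (hπ𝒜 A) hA)
  have herr := sum_pow_two_pow_le (by linarith : 0 ≤ 4 * ((1 - q) / (q * R))) (by linarith) L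
  show 0.9 ≤ hitProb p 𝒜
  linarith
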